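/- (Non-minimal realization.) Let A ∈ ℝ^{n×n}, B ∈ ℝ^{n×m}, C ∈ ℝ^{p×n}, and let u, x, y satisfy x(t+1) = A·x(t) + B·u(t) and y(t) = C·x(t) for all t. Fix L ≥ 1, suppose 𝒪_Lᵀ𝒪_L is invertible, set 𝒪_L† = (𝒪_Lᵀ𝒪_L)⁻¹𝒪_Lᵀ and S = [C·(𝒞_L − A^L·𝒪_L†·𝒯_L), C·A^L·𝒪_L†]. Then for every t ≥ L the non-minimal state ξ_t = (u_{t,L}, y_{t,L}) ∈ ℝ^{mL+pL} satisfies ξ_{t+1} = 𝔸·ξ_t + 𝔹·u(t) and y(t) = S·ξ_t, where 𝔸 ∈ ℝ^{(mL+pL)×(mL+pL)} is the block matrix whose first mL rows shift the input block down by one m-block (block row i equals I_m placed in block column i−1 for 2 ≤ i ≤ L, and block row 1 is zero), whose block row L+1 (of height p) equals S, and whose remaining y-block rows shift the output block down by one p-block (block row L+j equals I_p placed in block column L+j−1 for 2 ≤ j ≤ L); and 𝔹 ∈ ℝ^{(mL+pL)×m} has I_m as its top m×m block and zeros elsewhere. -/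

import Mathlib

/-! Over a window of length `L` the trajectory satisfies
`x(t) = A^L x(t−L) + 𝒞_L u_{t,L}` and `y_{t,L} = 𝒪_L x(t−L) + 𝒯_L u_{t,L}`.
Since `𝒪_L†` is a left inverse of `𝒪_L`, the second equation recovers
`x(t−L) = 𝒪_L† (y_{t,L} − 𝒯_L u_{t,L})` from past data, and substituting it into the first gives
`y(t) = C x(t) = S ξ_t`. The recursion for `ξ` is then a shift register whose only
non-shift row, the first output row of `𝔸`, is exactly this output equation. -/

open Matrix Finset

/-- Extended observability matrix `𝒪_L = [C A^{L−1}; …; C A; C]`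
(block row `i` is `C * A ^ (L - 1 - i)`). -/
def obsMat (n p L : ℕ) (A : Matrix (Fin n) (Fin n) ℝ) (C : Matrix (Fin p) (Fin n) ℝ) :
    Matrix (Fin L × Fin p) (Fin n) ℝ :=
  fun ia j => (C * A ^ (L - 1 - (ia.1 : ℕ))) ia.2 j

/-- Controllability matrix `𝒞_L = [B, A B, …, A^{L−1} B]`. -/
def ctrbMat (n m L : ℕ) (A : Matrix (Fin n) (Fin n) ℝ) (B : Matrix (Fin n) (Fin m) ℝ) :
    Matrix (Fin n) (Fin L × Fin m) ℝ :=
  fun i jb => (A ^ (jb.1 : ℕ) * B) i jb.2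

/-- Impulse-response Toeplitz matrix `𝒯_L`: block `(i,j)` equals `C A^{j−i−1} B` if `j > i`
and `0` otherwise (`0`-indexed blocks). -/
def toepMat (n m p L : ℕ) (A : Matrix (Fin n) (Fin n) ℝ) (B : Matrix (Fin n) (Fin m) ℝ)
    (C : Matrix (Fin p) (Fin n) ℝ) :
    Matrix (Fin L × Fin p) (Fin L × Fin m) ℝ :=
  fun ia jb =>
    if (ia.1 : ℕ) < (jb.1 : ℕ) then (C * A ^ ((jb.1 : ℕ) - (ia.1 : ℕ) - 1) * B) ia.2 jb.2 else 0

/-- Stacked past inputs `u_{t,L} = (u(t−1), …, u(t−L))`, most recent first. -/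
def uStack (m L : ℕ) (u : ℕ → Fin m → ℝ) (t : ℕ) : Fin L × Fin m → ℝ :=
  fun jb => u (t - 1 - (jb.1 : ℕ)) jb.2

/-- Stacked past outputs `y_{t,L} = (y(t−1), …, y(t−L))`, most recent first. -/
def yStack (p L : ℕ) (y : ℕ → Fin p → ℝ) (t : ℕ) : Fin L × Fin p → ℝ :=
  fun jc => y (t - 1 - (jc.1 : ℕ)) jc.2


/-- The matrix `S = [C(𝒞_L − A^L 𝒪_L† 𝒯_L), C A^L 𝒪_L†]`. -/
noncomputable def Smat (n m p L : ℕ) (A : Matrix (Fin n) (Fin n) ℝ) (B : Matrix (Fin n) (Fin m) ℝ)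
    (C : Matrix (Fin p) (Fin n) ℝ) :
    Matrix (Fin p) ((Fin L × Fin m) ⊕ (Fin L × Fin p)) ℝ :=
  Matrix.fromCols
    (C * (ctrbMat n m L A B -
      A ^ L * (((obsMat n p L A C)ᵀ * obsMat n p L A C)⁻¹ * (obsMat n p L A C)ᵀ) *
        toepMat n m p L A B C))
    (C * A ^ L * (((obsMat n p L A C)ᵀ * obsMat n p L A C)⁻¹ * (obsMat n p L A C)ᵀ))

/-- The non-minimal state `ξ_t = (u_{t,L}, y_{t,L})`. -/
def xiState (m p L : ℕ) (u : ℕ → Fin m → ℝ) (y : ℕ → Fin p → ℝ) (t : ℕ) :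
    (Fin L × Fin m) ⊕ (Fin L × Fin p) → ℝ :=
  Sum.elim (uStack m L u t) (yStack p L y t)

/-- The state matrix `𝔸` of the non-minimal realization: the input block rows shift the
stacked inputs down by one `m`-block (block row `0` is zero), block row `L+1`
(the first output block row) equals `S`, and the remaining output block rows shift the
stacked outputs down by one `p`-block. -/
noncomputable def AmatNM (n m p L : ℕ) (A : Matrix (Fin n) (Fin n) ℝ)
    (B : Matrix (Fin n) (Fin m) ℝ) (C : Matrix (Fin p) (Fin n) ℝ) :
    Matrix ((Fin L × Fin m) ⊕ (Fin L × Fin p)) ((Fin L × Fin m) ⊕ (Fin L × Fin p)) ℝ :=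
  fun r c =>
    match r with
    | Sum.inl ia =>
        match c with
        | Sum.inl jb => if (ia.1 : ℕ) = (jb.1 : ℕ) + 1 ∧ ia.2 = jb.2 then 1 else 0
        | Sum.inr _ => 0
    | Sum.inr ic =>
        if (ic.1 : ℕ) = 0 then Smat n m p L A B C ic.2 c
        else
          match c with
          | Sum.inl _ => 0
          | Sum.inr jd => if (ic.1 : ℕ) = (jd.1 : ℕ) + 1 ∧ ic.2 = jd.2 then 1 else 0

/-- The input matrix `𝔹` of the non-minimal realization: `I_m` on top, zeros below. -/
def BmatNM (m p L : ℕ) :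
    Matrix ((Fin L × Fin m) ⊕ (Fin L × Fin p)) (Fin m) ℝ :=
  fun r b =>
    match r with
    | Sum.inl ia => if (ia.1 : ℕ) = 0 ∧ ia.2 = b then 1 else 0
    | Sum.inr _ => 0


theorem state_eq_pow_mulVec_add_sum {R ι κ : Type*} [Semiring R] [Fintype ι] [DecidableEq ι]
    [Fintype κ] (A : Matrix ι ι R) (B : Matrix ι κ R) (u : ℕ → κ → R)
    (x : ℕ → ι → R) (hdyn : ∀ t, x (t + 1) = A *ᵥ x t + B *ᵥ u t) (s k : ℕ) :
    x (s + k) = A ^ k *ᵥ x s + ∑ i ∈ range k, (A ^ i * B) *ᵥ u (s + k - 1 - i) := by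
  induction k with
  | zero => simp
  | succ k ih =>
    have hA : A *ᵥ ∑ i ∈ range k, (A ^ i * B) *ᵥ u (s + k - 1 - i)
        = ∑ i ∈ range k, (A ^ (i + 1) * B) *ᵥ u (s + (k + 1) - 1 - (i + 1)) := by
      rw [mulVec_sum]
      refine sum_congr rfl fun i _ => ?_
      rw [mulVec_mulVec, ← Matrix.mul_assoc, ← pow_succ']
      congr 2
      omega
    rw [← add_assoc, hdyn, ih, mulVec_add, mulVec_mulVec, ← pow_succ', hA, sum_range_succ']
    simp [add_assoc]

theorem sum_range_ite_lt {M : Type*} [AddCommMonoid M] (i L : ℕ) (g : ℕ → M) :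
    ∑ j ∈ range L, (if i < j then g j else 0) = ∑ k ∈ range (L - 1 - i), g (i + 1 + k) := by
  rw [← sum_filter, show L - 1 - i = L - (i + 1) by omega, ← sum_Ico_eq_sum_range]
  congr 1
  ext j
  simp only [mem_filter, mem_range, mem_Ico]
  omega

section Stacks

variable {n m p L : ℕ} (A : Matrix (Fin n) (Fin n) ℝ) (B : Matrix (Fin n) (Fin m) ℝ)
  (C : Matrix (Fin p) (Fin n) ℝ) (u : ℕ → Fin m → ℝ)

theorem ctrbMat_mulVec_uStack (t : ℕ) :
    ctrbMat n m L A B *ᵥ uStack m L u t = ∑ j ∈ range L, (A ^ j * B) *ᵥ u (t - 1 - j) := by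
  ext r
  rw [Finset.sum_apply, ← Fin.sum_univ_eq_sum_range (fun j => ((A ^ j * B) *ᵥ u (t - 1 - j)) r)]
  simp only [mulVec, dotProduct, Fintype.sum_prod_type]
  rfl

theorem toepMat_mulVec_uStack_apply (t : ℕ) (i : Fin L) (a : Fin p) :
    (toepMat n m p L A B C *ᵥ uStack m L u t) (i, a) =
      ∑ j ∈ range L, if (i : ℕ) < j then ((C * A ^ (j - i - 1) * B) *ᵥ u (t - 1 - j)) a else 0 := by
  simp only [mulVec, dotProduct, Fintype.sum_prod_type]
  rw [← Fin.sum_univ_eq_sum_range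
    (fun j => if (i : ℕ) < j then ∑ c, (C * A ^ (j - i - 1) * B) a c * u (t - 1 - j) c else 0)]
  refine sum_congr rfl fun j _ => ?_
  split_ifs with h <;> simp [toepMat, uStack, h]

variable {x : ℕ → Fin n → ℝ}

theorem state_eq_pow_mulVec_add_ctrbMat_mulVec (hdyn : ∀ t, x (t + 1) = A *ᵥ x t + B *ᵥ u t)
    {t : ℕ} (ht : L ≤ t) :
    x t = A ^ L *ᵥ x (t - L) + ctrbMat n m L A B *ᵥ uStack m L u t := by
  have h := state_eq_pow_mulVec_add_sum A B u x hdyn (t - L) L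
  rwa [Nat.sub_add_cancel ht, ← ctrbMat_mulVec_uStack] at h

theorem yStack_eq_obsMat_mulVec_add_toepMat_mulVec {y : ℕ → Fin p → ℝ}
    (hdyn : ∀ t, x (t + 1) = A *ᵥ x t + B *ᵥ u t) (hout : ∀ t, y t = C *ᵥ x t)
    {t : ℕ} (ht : L ≤ t) :
    yStack p L y t = obsMat n p L A C *ᵥ x (t - L) + toepMat n m p L A B C *ᵥ uStack m L u t := by
  ext ⟨i, a⟩
  have hi := i.isLt
  have hsplit : t - 1 - i = (t - L) + (L - 1 - i) := by omega
  rw [Pi.add_apply, toepMat_mulVec_uStack_apply, sum_range_ite_lt, yStack, hout, hsplit,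
    state_eq_pow_mulVec_add_sum A B u x hdyn, mulVec_add, mulVec_mulVec, mulVec_sum,
    Pi.add_apply, Finset.sum_apply]
  congr 1
  refine sum_congr rfl fun k hk => ?_
  rw [mulVec_mulVec, ← Matrix.mul_assoc]
  simp only [mem_range] at hk
  rw [show (i : ℕ) + 1 + k - i - 1 = k by omega,
    show t - 1 - (i + 1 + k) = t - L + (L - 1 - i) - 1 - k by omega]

end Stacks

theorem mulVec_add_eq_fromCols_mulVec_sumElim {R ι ρ κ ο : Type*} [Ring R] [Fintype ι]
    [DecidableEq ι] [Fintype ρ] [Fintype κ] (C : Matrix ο ι R) (F : Matrix ι ι R)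
    (K : Matrix ι κ R) (P : Matrix ι ρ R) (O : Matrix ρ ι R) (T : Matrix ρ κ R)
    (hPO : P * O = 1) {z : ι → R} {v : κ → R} {w : ρ → R} (hw : w = O *ᵥ z + T *ᵥ v) :
    C *ᵥ (F *ᵥ z + K *ᵥ v) = fromCols (C * (K - F * P * T)) (C * F * P) *ᵥ Sum.elim v w := by
  have hz : z = P *ᵥ (w - T *ᵥ v) := by
    rw [hw, add_sub_cancel_right, mulVec_mulVec, hPO, one_mulVec]
  subst hz
  simp only [fromCols_mulVec_sumElim, ← mulVec_mulVec, sub_mulVec, mulVec_sub, mulVec_add]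
  abel

theorem output_eq_Smat_mulVec_xiState {n m p L : ℕ} {A : Matrix (Fin n) (Fin n) ℝ}
    {B : Matrix (Fin n) (Fin m) ℝ} {C : Matrix (Fin p) (Fin n) ℝ} {u : ℕ → Fin m → ℝ}
    {x : ℕ → Fin n → ℝ} {y : ℕ → Fin p → ℝ} (hdyn : ∀ t, x (t + 1) = A *ᵥ x t + B *ᵥ u t)
    (hout : ∀ t, y t = C *ᵥ x t) (hObs : IsUnit ((obsMat n p L A C)ᵀ * obsMat n p L A C))
    {t : ℕ} (ht : L ≤ t) :
    y t = Smat n m p L A B C *ᵥ xiState m p L u y t := by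
  set O := obsMat n p L A C
  have hPO : ((Oᵀ * O)⁻¹ * Oᵀ) * O = 1 := by
    rw [Matrix.mul_assoc, nonsing_inv_mul _ ((isUnit_iff_isUnit_det _).mp hObs)]
  rw [hout, state_eq_pow_mulVec_add_ctrbMat_mulVec A B u hdyn ht]
  exact mulVec_add_eq_fromCols_mulVec_sumElim _ _ _ _ _ _ hPO
    (yStack_eq_obsMat_mulVec_add_toepMat_mulVec A B C u hdyn hout ht)

theorem sum_ite_succ_eq_and_eq_mul {R : Type*} [Semiring R] {q L : ℕ} (v : Fin L × Fin q → R)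
    (b : Fin q) {k : ℕ} (hk : k < L) :
    ∑ jb : Fin L × Fin q, (if k + 1 = jb.1 + 1 ∧ b = jb.2 then 1 else 0) * v jb =
      v (⟨k, hk⟩, b) := by
  have hcond : ∀ jb : Fin L × Fin q, (k + 1 = jb.1 + 1 ∧ b = jb.2) ↔ (⟨k, hk⟩, b) = jb := by
    rintro ⟨j, c⟩
    simp only [Prod.ext_iff, Fin.ext_iff]
    omega
  simp_rw [hcond, ite_mul, one_mul, zero_mul, sum_ite_eq, mem_univ, if_true]

theorem xiState_succ {n m p L : ℕ} {A : Matrix (Fin n) (Fin n) ℝ}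
    {B : Matrix (Fin n) (Fin m) ℝ} {C : Matrix (Fin p) (Fin n) ℝ} {u : ℕ → Fin m → ℝ}
    {y : ℕ → Fin p → ℝ} {t : ℕ} (hS : y t = Smat n m p L A B C *ᵥ xiState m p L u y t) :
    xiState m p L u y (t + 1) =
      AmatNM n m p L A B C *ᵥ xiState m p L u y t + BmatNM m p L *ᵥ u t := by
  ext (⟨i, b⟩ | ⟨i, c⟩) <;> rcases hi : (i : ℕ) with _ | k
  · simp [mulVec, dotProduct, Fintype.sum_sum_type, AmatNM, BmatNM, xiState, uStack, hi]
  · have hk : k < L := by omega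
    simp only [Pi.add_apply, mulVec, dotProduct, Fintype.sum_sum_type, AmatNM, BmatNM, xiState,
      Sum.elim_inl, Sum.elim_inr, zero_mul, sum_const_zero, add_zero, hi, Nat.succ_ne_zero,
      false_and, if_false]
    rw [sum_ite_succ_eq_and_eq_mul _ b hk]
    simp [uStack, hi, Nat.sub_sub, Nat.add_comm 1 k]
  · have hrow : (AmatNM n m p L A B C *ᵥ xiState m p L u y t) (Sum.inr (i, c)) =
        (Smat n m p L A B C *ᵥ xiState m p L u y t) c := by
      simp [mulVec, dotProduct, AmatNM, hi]
    rw [Pi.add_apply, hrow, ← hS]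
    simp [mulVec, dotProduct, BmatNM, xiState, yStack, hi]
  · have hk : k < L := by omega
    simp only [Pi.add_apply, mulVec, dotProduct, Fintype.sum_sum_type, AmatNM, BmatNM, xiState,
      Sum.elim_inl, Sum.elim_inr, zero_mul, sum_const_zero, zero_add, add_zero, hi,
      Nat.succ_ne_zero, if_false]
    rw [sum_ite_succ_eq_and_eq_mul _ c hk]
    simp [yStack, hi, Nat.sub_sub, Nat.add_comm 1 k]

theorem nonminimal_realization_general
    (n m p L : ℕ)
    (A : Matrix (Fin n) (Fin n) ℝ) (B : Matrix (Fin n) (Fin m) ℝ)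
    (C : Matrix (Fin p) (Fin n) ℝ)
    (u : ℕ → Fin m → ℝ) (x : ℕ → Fin n → ℝ) (y : ℕ → Fin p → ℝ)
    (hdyn : ∀ t : ℕ, x (t + 1) = A.mulVec (x t) + B.mulVec (u t))
    (hout : ∀ t : ℕ, y t = C.mulVec (x t))
    (hObs : IsUnit ((obsMat n p L A C)ᵀ * obsMat n p L A C)) :
    ∀ t : ℕ, L ≤ t →
      xiState m p L u y (t + 1) =
          (AmatNM n m p L A B C).mulVec (xiState m p L u y t) +
            (BmatNM m p L).mulVec (u t) ∧
        y t = (Smat n m p L A B C).mulVec (xiState m p L u y t) := by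
  intro t ht
  have hS := output_eq_Smat_mulVec_xiState hdyn hout hObs ht
  exact ⟨xiState_succ hS, hS⟩

theorem nonminimal_realization
    (n m p L : ℕ) (hL : 1 ≤ L)
    (A : Matrix (Fin n) (Fin n) ℝ) (B : Matrix (Fin n) (Fin m) ℝ)
    (C : Matrix (Fin p) (Fin n) ℝ)
    (u : ℕ → Fin m → ℝ) (x : ℕ → Fin n → ℝ) (y : ℕ → Fin p → ℝ)
    (hdyn : ∀ t : ℕ, x (t + 1) = A.mulVec (x t) + B.mulVec (u t))
    (hout : ∀ t : ℕ, y t = C.mulVec (x t))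
    (hObs : IsUnit ((obsMat n p L A C)ᵀ * obsMat n p L A C)) :
    ∀ t : ℕ, L ≤ t →
      xiState m p L u y (t + 1) =
          (AmatNM n m p L A B C).mulVec (xiState m p L u y t) +
            (BmatNM m p L).mulVec (u t) ∧
        y t = (Smat n m p L A B C).mulVec (xiState m p L u y t) :=
  nonminimal_realization_general n m p L A B C u x y hdyn hout hObs
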